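/- Let G be a finite connected simple graph and A a nonempty set of vertices. Consider threshold-1 Greenberg–Hastings dynamics (S = {n ∈ ℕ : n ≥ 1}) started from the configuration c_0 in which every vertex of A is excited and every other vertex is resting. Then for every time t ≥ 0 and every vertex v: c_t(v) is excited if and only if dist(v,A) = t, and c_t(v) is refractory if and only if t ≥ 1 and dist(v,A) = t − 1, where dist(v,A) = min_{a ∈ A} dist(v,a). (Waves emanating from several sources merge rather than pass through each other.) -/

import Mathlib

/-- The three states of a Greenberg–Hastings excitable automaton node. -/
inductive GHState where
  | resting : GHState
  | excited : GHState
  | refractory : GHState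
deriving DecidableEq

open GHState

/-- Number of excited neighbours of `v` in configuration `c`. -/
def excitedCount {V : Type*} (G : SimpleGraph V) [Fintype V] [DecidableRel G.Adj]
    (c : V → GHState) (v : V) : ℕ :=
  ((G.neighborFinset v).filter (fun u => c u = excited)).card

/-- Greenberg–Hastings update map `F_S`: a resting vertex becomes excited iff its
number of excited neighbours lies in `S`; an excited vertex becomes refractory;
a refractory vertex becomes resting. -/
def ghStep {V : Type*} (G : SimpleGraph V) [Fintype V] [DecidableRel G.Adj]
    (S : Set ℕ) [DecidablePred (· ∈ S)] (c : V → GHState) : V → GHState :=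
  fun v =>
    match c v with
    | resting => if excitedCount G c v ∈ S then excited else resting
    | excited => refractory
    | refractory => resting

/-!
The distance `d = dist(·, A)` changes by at most one along edges and, where positive, drops by
one along some edge. For any such potential `d`, threshold-1 dynamics maps the configuration that
is excited on `{d = t}`, refractory on `{d = t - 1}` and resting elsewhere to the same
configuration at time `t + 1`: a vertex outside `{d = t - 1, t}` has an excited neighbour exactly
when `d = t + 1` there. At `t = 0` this configuration is the initial one.
-/

namespace SimpleGraph

variable {V : Type*} {G : SimpleGraph V}

theorem exists_adj_dist_eq_of_dist_eq_succ {v a : V} {n : ℕ} (hva : G.dist v a = n + 1) :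
    ∃ u, G.Adj v u ∧ G.dist u a = n := by
  obtain ⟨p, hp⟩ :=
    (Reachable.of_dist_ne_zero (by omega : G.dist v a ≠ 0)).exists_walk_length_eq_dist
  rw [hva] at hp
  rcases p with _ | ⟨hvu, q⟩
  · simp at hp
  rename_i u
  refine ⟨u, hvu, le_antisymm ?_ ?_⟩
  · rw [Walk.length_cons, Nat.add_right_cancel_iff] at hp
    exact hp ▸ dist_le q
  · rcases hvu.symm.diff_dist_adj (u := a) with h | h | h <;>
      rw [dist_comm, h, dist_comm] at hva <;> omega

noncomputable def setDist (G : SimpleGraph V) (A : Finset V) (hA : A.Nonempty) (v : V) : ℕ :=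
  A.inf' hA (G.dist v ·)

section setDist

variable {A : Finset V} {hA : A.Nonempty}

theorem setDist_le_dist {v a : V} (ha : a ∈ A) : G.setDist A hA v ≤ G.dist v a :=
  Finset.inf'_le _ ha

theorem exists_mem_setDist_eq (v : V) : ∃ a ∈ A, G.setDist A hA v = G.dist v a :=
  Finset.exists_mem_eq_inf' hA _

theorem Connected.setDist_eq_zero_iff (hconn : G.Connected) {v : V} :
    G.setDist A hA v = 0 ↔ v ∈ A := by
  refine ⟨fun h => ?_, fun hv => Nat.eq_zero_of_le_zero ?_⟩
  · obtain ⟨a, ha, hmin⟩ := G.exists_mem_setDist_eq (hA := hA) v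
    rw [hmin, hconn.dist_eq_zero_iff] at h
    rwa [h]
  · simpa using G.setDist_le_dist (hA := hA) (v := v) hv

theorem Adj.setDist_le {u v : V} (huv : G.Adj u v) :
    G.setDist A hA u ≤ G.setDist A hA v + 1 := by
  obtain ⟨a, ha, hmin⟩ := G.exists_mem_setDist_eq (hA := hA) v
  have hdist : G.dist u a ≤ G.dist v a + 1 := by
    rw [dist_comm (u := u), dist_comm (u := v)]
    rcases huv.diff_dist_adj (u := a) with h | h | h <;> omega
  exact (setDist_le_dist ha).trans (hmin ▸ hdist)

theorem exists_adj_setDist_eq_of_setDist_eq_succ {v : V} {n : ℕ}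
    (hv : G.setDist A hA v = n + 1) : ∃ u, G.Adj v u ∧ G.setDist A hA u = n := by
  obtain ⟨a, ha, hmin⟩ := G.exists_mem_setDist_eq (hA := hA) v
  obtain ⟨u, hvu, hu⟩ := exists_adj_dist_eq_of_dist_eq_succ (hmin ▸ hv)
  have := hvu.setDist_le (hA := hA)
  exact ⟨u, hvu, le_antisymm (hu ▸ setDist_le_dist ha) (by omega)⟩

end setDist

end SimpleGraph

section Waves

variable {V : Type*}

def waveConfig (d : V → ℕ) (t : ℕ) : V → GHState := fun v =>
  if d v = t then excited else if d v + 1 = t then refractory else resting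

theorem waveConfig_eq_excited {d : V → ℕ} {t : ℕ} {v : V} :
    waveConfig d t v = excited ↔ d v = t := by
  unfold waveConfig
  split_ifs <;> simp_all

theorem waveConfig_eq_refractory {d : V → ℕ} {t : ℕ} {v : V} :
    waveConfig d t v = refractory ↔ 1 ≤ t ∧ d v = t - 1 := by
  unfold waveConfig
  split_ifs <;> simp <;> omega

variable [Fintype V] {G : SimpleGraph V} [DecidableRel G.Adj]

theorem one_le_excitedCount_iff {c : V → GHState} {v : V} :
    1 ≤ excitedCount G c v ↔ ∃ u, G.Adj v u ∧ c u = excited := by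
  simp [excitedCount, Nat.one_le_iff_ne_zero, Finset.card_eq_zero, Finset.filter_eq_empty_iff]

theorem ghStep_apply_of_resting {S : Set ℕ} [DecidablePred (· ∈ S)] {c : V → GHState} {v : V}
    (hv : c v = resting) :
    ghStep G S c v = if excitedCount G c v ∈ S then excited else resting := by
  simp [ghStep, hv]

theorem ghStep_waveConfig {d : V → ℕ} (hadj : ∀ u v, G.Adj u v → d u ≤ d v + 1)
    (hdesc : ∀ v n, d v = n + 1 → ∃ u, G.Adj v u ∧ d u = n) (t : ℕ) :
    ghStep G {n | 1 ≤ n} (waveConfig d t) = waveConfig d (t + 1) := by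
  funext v
  by_cases hexc : d v = t
  · simp [ghStep, waveConfig, hexc]
  by_cases href : d v + 1 = t
  · simp [ghStep, waveConfig, hexc, href]
    omega
  have hfront : (∃ u, G.Adj v u ∧ d u = t) ↔ d v = t + 1 := by
    refine ⟨fun ⟨u, hvu, hu⟩ => ?_, hdesc v t⟩
    have := hadj u v hvu.symm
    have := hadj v u hvu
    omega
  have hrest : waveConfig d t v = resting := by simp [waveConfig, hexc, href]
  rw [ghStep_apply_of_resting hrest]
  simp only [Set.mem_ofPred_eq, one_le_excitedCount_iff, waveConfig_eq_excited, hfront]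
  simp [waveConfig, hexc]

theorem iterate_ghStep_waveConfig {d : V → ℕ} (hadj : ∀ u v, G.Adj u v → d u ≤ d v + 1)
    (hdesc : ∀ v n, d v = n + 1 → ∃ u, G.Adj v u ∧ d u = n) (t : ℕ) :
    (ghStep G {n | 1 ≤ n})^[t] (waveConfig d 0) = waveConfig d t := by
  induction t with
  | zero => rfl
  | succ t ih => rw [Function.iterate_succ_apply', ih, ghStep_waveConfig hadj hdesc]

end Waves

/-- Threshold-1 Greenberg–Hastings dynamics started from a nonempty excited set `A`
(all other vertices resting): at time `t`, a vertex is excited iff its distance to `A`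
is `t`, and refractory iff `t ≥ 1` and its distance to `A` is `t-1`.  Waves emanating
from several sources merge rather than pass through each other. -/
theorem multi_source_waves_merge {V : Type*} (G : SimpleGraph V)
    [Fintype V] [DecidableEq V] [DecidableRel G.Adj]
    (hconn : G.Connected) (A : Finset V) (hA : A.Nonempty) :
    ∀ t : ℕ, ∀ v : V,
      ((ghStep G {n : ℕ | 1 ≤ n})^[t] (fun u => if u ∈ A then excited else resting) v
          = excited ↔ A.inf' hA (fun a => G.dist v a) = t) ∧
      ((ghStep G {n : ℕ | 1 ≤ n})^[t] (fun u => if u ∈ A then excited else resting) v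
          = refractory ↔ 1 ≤ t ∧ A.inf' hA (fun a => G.dist v a) = t - 1) := by
  have hinit : (fun u => if u ∈ A then excited else resting) = waveConfig (G.setDist A hA) 0 := by
    funext u
    simp [waveConfig, hconn.setDist_eq_zero_iff]
  intro t v
  rw [hinit, iterate_ghStep_waveConfig (fun _ _ huv => huv.setDist_le)
    (fun _ _ => SimpleGraph.exists_adj_setDist_eq_of_setDist_eq_succ)]
  exact ⟨waveConfig_eq_excited, waveConfig_eq_refractory⟩
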